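/- Assume max{δ, ν} < 1/4 and let M ∈ Ŵ ∩ S satisfy λ_1(M) = ‖M‖, λ_1(M) > λ_2(M), and the first-order stationarity condition u_1(M)^T X u_1(M) = λ_1(M)·⟨X, M⟩ for every X ∈ Ŵ. Then the smallest eigenvalue satisfies λ_d(M) ≥ −2δ/λ_1(M) − 8δ − 4ν. -/

import Mathlib

open Matrix

noncomputable def vnorm {d : ℕ} (v : Fin d → ℝ) : ℝ := Real.sqrt (∑ i, v i ^ 2)

noncomputable def frobInner {d : ℕ} (M N : Matrix (Fin d) (Fin d) ℝ) : ℝ :=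
  ∑ i, ∑ j, M i j * N i j

noncomputable def frobNorm {d : ℕ} (M : Matrix (Fin d) (Fin d) ℝ) : ℝ :=
  Real.sqrt (frobInner M M)

def IsOrthProjOn {d : ℕ} (V : Submodule ℝ (Matrix (Fin d) (Fin d) ℝ))
    (P : Matrix (Fin d) (Fin d) ℝ →ₗ[ℝ] Matrix (Fin d) (Fin d) ℝ) : Prop :=
  (∀ X, P X ∈ V) ∧ (∀ X ∈ V, P X = X) ∧ ∀ X Y, frobInner (P X) Y = frobInner X (P Y)

noncomputable def hsNorm {d : ℕ}
    (T : Matrix (Fin d) (Fin d) ℝ →ₗ[ℝ] Matrix (Fin d) (Fin d) ℝ) : ℝ :=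
  Real.sqrt (∑ i, ∑ j,
    frobInner (T (Matrix.single i j 1)) (T (Matrix.single i j 1)))

noncomputable def specNorm {d : ℕ} (M : Matrix (Fin d) (Fin d) ℝ) : ℝ :=
  sSup {r : ℝ | ∃ v : Fin d → ℝ, (∑ i, v i ^ 2) = 1 ∧ r = |dotProduct v (M.mulVec v)|}

noncomputable def lamTop {d : ℕ} (M : Matrix (Fin d) (Fin d) ℝ) : ℝ :=
  sSup {r : ℝ | ∃ v : Fin d → ℝ, (∑ i, v i ^ 2) = 1 ∧ r = dotProduct v (M.mulVec v)}

def IsLocMaxSpec {d : ℕ} (V : Submodule ℝ (Matrix (Fin d) (Fin d) ℝ))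
    (M : Matrix (Fin d) (Fin d) ℝ) : Prop :=
  M ∈ V ∧ frobNorm M ≤ 1 ∧
    ∃ ε > 0, ∀ X ∈ V, frobNorm X ≤ 1 → frobNorm (X - M) < ε → specNorm X ≤ specNorm M

/-!
Write `U = u₁u₁ᵀ`, `V = u_d u_dᵀ` and `L = λ₁(M)`. Stationarity says precisely that the
projection of `U` onto `Ŵ` is `L • M`, so `⟨P_Ŵ U, V⟩ = L λ_d`; replacing `P_Ŵ` by `P_W` costs at
most `δ`, both in this inner product and in the bound `‖P_W U‖ ≤ L + δ`.
Expand `P_W U = ∑ a_j w_j w_jᵀ`. The Gram weights `⟨w_j, w_k⟩²` have unit diagonal and row sums at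
most `1 + ν`, so `(1 - ν) ‖a‖² ≤ ‖P_W U‖²`, and since `∑_k a_k ⟨w_k, w_j⟩² = ⟨w_j, u₁⟩² ≥ 0`, every
coefficient satisfies `a_j ≥ -ν ‖a‖`. Hence `⟨P_W U, V⟩ = ∑ a_j ⟨w_j, u_d⟩² ≥ -ν (1 + ν) ‖a‖`,
and `‖a‖ ≤ 2 (L + δ)` turns this into `L λ_d ≥ -2δ - 4νL`.
-/

open scoped RealInnerProductSpace

section Frobenius

variable {d : ℕ}

def frobVec : Matrix (Fin d) (Fin d) ℝ →ₗ[ℝ] EuclideanSpace ℝ (Fin d × Fin d) where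
  toFun M := WithLp.toLp 2 fun p => M p.1 p.2
  map_add' _ _ := rfl
  map_smul' _ _ := rfl

theorem frobInner_eq_inner (M N : Matrix (Fin d) (Fin d) ℝ) :
    frobInner M N = ⟪frobVec M, frobVec N⟫ := by
  simp only [frobInner, frobVec, PiLp.inner_apply, RCLike.inner_apply, conj_trivial,
    Fintype.sum_prod_type]
  exact Finset.sum_congr rfl fun i _ => Finset.sum_congr rfl fun j _ => mul_comm _ _

theorem frobNorm_eq_norm (M : Matrix (Fin d) (Fin d) ℝ) : frobNorm M = ‖frobVec M‖ := by
  rw [frobNorm, frobInner_eq_inner, real_inner_self_eq_norm_sq, Real.sqrt_sq (norm_nonneg _)]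

theorem frobVec_injective : Function.Injective (frobVec (d := d)) := by
  intro M N h
  ext i j
  exact congrArg (fun x : EuclideanSpace ℝ (Fin d × Fin d) => x (i, j)) h

theorem frobInner_comm (M N : Matrix (Fin d) (Fin d) ℝ) : frobInner M N = frobInner N M := by
  rw [frobInner_eq_inner, frobInner_eq_inner, real_inner_comm]

theorem frobNorm_nonneg (M : Matrix (Fin d) (Fin d) ℝ) : 0 ≤ frobNorm M :=
  Real.sqrt_nonneg _

theorem frobNorm_sq (M : Matrix (Fin d) (Fin d) ℝ) : frobNorm M ^ 2 = frobInner M M := by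
  rw [frobNorm_eq_norm, frobInner_eq_inner, real_inner_self_eq_norm_sq]

theorem abs_frobInner_le (M N : Matrix (Fin d) (Fin d) ℝ) :
    |frobInner M N| ≤ frobNorm M * frobNorm N := by
  rw [frobInner_eq_inner, frobNorm_eq_norm, frobNorm_eq_norm]
  exact abs_real_inner_le_norm _ _

theorem frobNorm_add_le (M N : Matrix (Fin d) (Fin d) ℝ) :
    frobNorm (M + N) ≤ frobNorm M + frobNorm N := by
  simpa only [frobNorm_eq_norm, map_add] using norm_add_le _ _

theorem frobInner_smul_left (c : ℝ) (M N : Matrix (Fin d) (Fin d) ℝ) :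
    frobInner (c • M) N = c * frobInner M N := by
  rw [frobInner_eq_inner, frobInner_eq_inner, map_smul, real_inner_smul_left]

theorem frobNorm_smul (c : ℝ) (M : Matrix (Fin d) (Fin d) ℝ) :
    frobNorm (c • M) = |c| * frobNorm M := by
  rw [frobNorm_eq_norm, frobNorm_eq_norm, map_smul, norm_smul, Real.norm_eq_abs]

theorem eq_of_forall_frobInner_eq {M N : Matrix (Fin d) (Fin d) ℝ}
    (h : ∀ X, frobInner M X = frobInner N X) : M = N := by
  refine frobVec_injective (ext_inner_right ℝ fun v => ?_)
  obtain ⟨X, rfl⟩ : ∃ X, frobVec X = v := ⟨fun i j => v (i, j), rfl⟩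
  simpa only [frobInner_eq_inner] using h X

theorem hsNorm_nonneg (T : Matrix (Fin d) (Fin d) ℝ →ₗ[ℝ] Matrix (Fin d) (Fin d) ℝ) :
    0 ≤ hsNorm T :=
  Real.sqrt_nonneg _

theorem frobNorm_apply_le_hsNorm_mul (T : Matrix (Fin d) (Fin d) ℝ →ₗ[ℝ] Matrix (Fin d) (Fin d) ℝ)
    (X : Matrix (Fin d) (Fin d) ℝ) : frobNorm (T X) ≤ hsNorm T * frobNorm X := by
  classical
  have hX : frobVec (T X) = ∑ p : Fin d × Fin d, X p.1 p.2 • frobVec (T (single p.1 p.2 1)) := by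
    conv_lhs => rw [matrix_eq_sum_single X]
    simp only [map_sum, Fintype.sum_prod_type]
    refine Finset.sum_congr rfl fun i _ => Finset.sum_congr rfl fun j _ => ?_
    rw [← map_smul, ← map_smul, smul_single, smul_eq_mul, mul_one]
  have hXnorm : √(∑ p : Fin d × Fin d, X p.1 p.2 ^ 2) = frobNorm X := by
    simp only [frobNorm, frobInner, Fintype.sum_prod_type, sq]
  have hTnorm : √(∑ p : Fin d × Fin d, ‖frobVec (T (single p.1 p.2 1))‖ ^ 2) = hsNorm T := by
    simp only [hsNorm, frobInner_eq_inner, real_inner_self_eq_norm_sq, Fintype.sum_prod_type]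
  calc frobNorm (T X)
      ≤ ∑ p : Fin d × Fin d, |X p.1 p.2| * ‖frobVec (T (single p.1 p.2 1))‖ := by
        rw [frobNorm_eq_norm, hX]
        refine (norm_sum_le _ _).trans_eq (Finset.sum_congr rfl fun p _ => ?_)
        rw [norm_smul, Real.norm_eq_abs]
    _ ≤ √(∑ p : Fin d × Fin d, |X p.1 p.2| ^ 2) *
          √(∑ p : Fin d × Fin d, ‖frobVec (T (single p.1 p.2 1))‖ ^ 2) :=
        Real.sum_mul_le_sqrt_mul_sqrt _ _ _
    _ = hsNorm T * frobNorm X := by simp only [sq_abs, hXnorm, hTnorm, mul_comm]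

theorem frobNorm_apply_le_add_hsNorm_sub
    (P Q : Matrix (Fin d) (Fin d) ℝ →ₗ[ℝ] Matrix (Fin d) (Fin d) ℝ) (X : Matrix (Fin d) (Fin d) ℝ) :
    frobNorm (P X) ≤ frobNorm (Q X) + hsNorm (P - Q) * frobNorm X := by
  have hsub := frobNorm_apply_le_hsNorm_mul (P - Q) X
  have hadd := frobNorm_add_le (Q X) ((P - Q) X)
  rw [LinearMap.sub_apply] at hsub
  rw [LinearMap.sub_apply, add_sub_cancel] at hadd
  linarith

theorem abs_frobInner_apply_sub_apply_le
    (P Q : Matrix (Fin d) (Fin d) ℝ →ₗ[ℝ] Matrix (Fin d) (Fin d) ℝ)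
    (X Y : Matrix (Fin d) (Fin d) ℝ) :
    |frobInner (P X) Y - frobInner (Q X) Y| ≤ hsNorm (P - Q) * frobNorm X * frobNorm Y := by
  rw [frobInner_eq_inner, frobInner_eq_inner, ← inner_sub_left, ← map_sub, ← LinearMap.sub_apply,
    ← frobInner_eq_inner]
  exact (abs_frobInner_le _ _).trans <|
    mul_le_mul_of_nonneg_right (frobNorm_apply_le_hsNorm_mul _ _) (frobNorm_nonneg _)

end Frobenius

section RankOne

variable {d : ℕ}

theorem dotProduct_self_eq_sum_sq (v : Fin d → ℝ) : v ⬝ᵥ v = ∑ i, v i ^ 2 := by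
  simp only [dotProduct, sq]

theorem vnorm_eq_one_iff {v : Fin d → ℝ} : vnorm v = 1 ↔ v ⬝ᵥ v = 1 := by
  rw [vnorm, Real.sqrt_eq_one, dotProduct_self_eq_sum_sq]

theorem dotProduct_mulVec_self_of_mulVec_eq_smul {M : Matrix (Fin d) (Fin d) ℝ} {v : Fin d → ℝ}
    {μ : ℝ} (hv : v ⬝ᵥ v = 1) (h : M *ᵥ v = μ • v) : v ⬝ᵥ M *ᵥ v = μ := by
  rw [h, dotProduct_smul, hv, smul_eq_mul, mul_one]

theorem frobInner_vecMulVec_self_left (v : Fin d → ℝ) (X : Matrix (Fin d) (Fin d) ℝ) :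
    frobInner (vecMulVec v v) X = v ⬝ᵥ X *ᵥ v := by
  simp only [frobInner, vecMulVec_apply, dotProduct, mulVec, Finset.mul_sum]
  exact Finset.sum_congr rfl fun i _ => Finset.sum_congr rfl fun j _ => by ring

theorem frobInner_vecMulVec_self_vecMulVec_self (v w : Fin d → ℝ) :
    frobInner (vecMulVec v v) (vecMulVec w w) = (v ⬝ᵥ w) ^ 2 := by
  rw [frobInner_vecMulVec_self_left, vecMulVec_mulVec, dotProduct_smul, op_smul_eq_mul,
    dotProduct_comm w v, sq]

theorem frobNorm_vecMulVec_self {v : Fin d → ℝ} (hv : v ⬝ᵥ v = 1) :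
    frobNorm (vecMulVec v v) = 1 := by
  rw [frobNorm, frobInner_vecMulVec_self_vecMulVec_self, hv, one_pow, Real.sqrt_one]

theorem abs_dotProduct_mulVec_le_specNorm (M : Matrix (Fin d) (Fin d) ℝ) {v : Fin d → ℝ}
    (hv : v ⬝ᵥ v = 1) : |v ⬝ᵥ M *ᵥ v| ≤ specNorm M := by
  refine le_csSup ⟨frobNorm M, ?_⟩ ⟨v, (dotProduct_self_eq_sum_sq v).symm.trans hv, rfl⟩
  rintro _ ⟨x, hx, rfl⟩
  rw [← dotProduct_self_eq_sum_sq] at hx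
  simpa only [← frobInner_vecMulVec_self_left, frobNorm_vecMulVec_self hx, one_mul]
    using abs_frobInner_le (vecMulVec x x) M

theorem abs_le_specNorm_of_mulVec_eq_smul {M : Matrix (Fin d) (Fin d) ℝ} {v : Fin d → ℝ}
    {μ : ℝ} (hv : v ⬝ᵥ v = 1) (h : M *ᵥ v = μ • v) : |μ| ≤ specNorm M :=
  dotProduct_mulVec_self_of_mulVec_eq_smul hv h ▸ abs_dotProduct_mulVec_le_specNorm M hv

theorem frobInner_sum_smul_vecMulVec_self {ι : Type*} [Fintype ι] (a : ι → ℝ)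
    (w : ι → Fin d → ℝ) (v : Fin d → ℝ) :
    frobInner (∑ j, a j • vecMulVec (w j) (w j)) (vecMulVec v v) = ∑ j, a j * (w j ⬝ᵥ v) ^ 2 := by
  rw [frobInner_eq_inner, map_sum, sum_inner]
  refine Finset.sum_congr rfl fun j _ => ?_
  rw [map_smul, real_inner_smul_left, ← frobInner_eq_inner,
    frobInner_vecMulVec_self_vecMulVec_self]

theorem frobNorm_sum_smul_vecMulVec_self_sq {ι : Type*} [Fintype ι] (a : ι → ℝ)
    (w : ι → Fin d → ℝ) :
    frobNorm (∑ j, a j • vecMulVec (w j) (w j)) ^ 2 =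
      ∑ j, ∑ k, a j * a k * (w k ⬝ᵥ w j) ^ 2 := by
  set S := ∑ j, a j • vecMulVec (w j) (w j)
  calc frobNorm S ^ 2 = ∑ k, a k * frobInner S (vecMulVec (w k) (w k)) := by
        simp only [frobNorm_sq, frobInner_eq_inner, S, map_sum, map_smul, inner_sum,
          real_inner_smul_right]
    _ = ∑ j, ∑ k, a j * a k * (w k ⬝ᵥ w j) ^ 2 := by
        simp only [S, frobInner_sum_smul_vecMulVec_self, Finset.mul_sum]
        exact Finset.sum_congr rfl fun j _ => Finset.sum_congr rfl fun k _ => by ring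

end RankOne

namespace IsOrthProjOn

variable {d : ℕ} {V : Submodule ℝ (Matrix (Fin d) (Fin d) ℝ)}
  {P : Matrix (Fin d) (Fin d) ℝ →ₗ[ℝ] Matrix (Fin d) (Fin d) ℝ}

theorem apply_eq_of_forall_frobInner_eq (hP : IsOrthProjOn V P) {Z Z' : Matrix (Fin d) (Fin d) ℝ}
    (hZ' : Z' ∈ V) (h : ∀ Y ∈ V, frobInner Z Y = frobInner Z' Y) : P Z = Z' := by
  refine eq_of_forall_frobInner_eq fun X => ?_
  rw [hP.2.2, h _ (hP.1 X), ← hP.2.2, hP.2.1 Z' hZ']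

theorem apply_vecMulVec_self_eq_smul (hP : IsOrthProjOn V P) {M : Matrix (Fin d) (Fin d) ℝ}
    (hM : M ∈ V) (u : Fin d → ℝ) (L : ℝ) (hstat : ∀ X ∈ V, u ⬝ᵥ X *ᵥ u = L * frobInner X M) :
    P (vecMulVec u u) = L • M := by
  refine hP.apply_eq_of_forall_frobInner_eq (V.smul_mem L hM) fun Y hY => ?_
  rw [frobInner_vecMulVec_self_left, hstat Y hY, frobInner_comm, frobInner_eq_inner,
    frobInner_eq_inner, map_smul, real_inner_smul_left]

theorem exists_gram_coeffs {ι : Type*} [Fintype ι] {w : ι → Fin d → ℝ}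
    (hP : IsOrthProjOn (Submodule.span ℝ (Set.range fun j => vecMulVec (w j) (w j))) P)
    (u : Fin d → ℝ) :
    ∃ a : ι → ℝ, P (vecMulVec u u) = ∑ j, a j • vecMulVec (w j) (w j) ∧
      ∀ j, ∑ k, a k * (w k ⬝ᵥ w j) ^ 2 = (w j ⬝ᵥ u) ^ 2 := by
  obtain ⟨a, ha⟩ := (Submodule.mem_span_range_iff_exists_fun ℝ).1 (hP.1 (vecMulVec u u))
  refine ⟨a, ha.symm, fun j => ?_⟩
  have hj : vecMulVec (w j) (w j) ∈ Submodule.span ℝ (Set.range fun j => vecMulVec (w j) (w j)) :=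
    Submodule.subset_span ⟨j, rfl⟩
  rw [← frobInner_sum_smul_vecMulVec_self, ha, hP.2.2, hP.2.1 _ hj, frobInner_comm,
    frobInner_vecMulVec_self_vecMulVec_self]

end IsOrthProjOn

section Gram

variable {ι : Type*} [Fintype ι] {g : ι → ι → ℝ} {ν : ℝ}

theorem neg_mul_le_of_sum_mul_nonneg (hg : ∀ j k, 0 ≤ g j k) (hdiag : ∀ j, g j j = 1)
    (hrow : ∀ j, ∑ k, g j k ≤ 1 + ν) {a : ι → ℝ} {α : ℝ}
    (hα : ∀ k, a k ≤ α) (hα0 : 0 ≤ α) {j : ι} (hj : 0 ≤ ∑ k, a k * g j k) :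
    -(ν * α) ≤ a j := by
  have hdrop : (α - a j) * g j j ≤ ∑ k, (α - a k) * g j k :=
    Finset.single_le_sum (f := fun k => (α - a k) * g j k)
      (fun k _ => mul_nonneg (sub_nonneg.2 (hα k)) (hg j k)) (Finset.mem_univ j)
  have hexpand : ∑ k, (α - a k) * g j k = α * ∑ k, g j k - ∑ k, a k * g j k := by
    simp only [sub_mul, Finset.sum_sub_distrib, Finset.mul_sum]
  rw [hdiag, mul_one, hexpand] at hdrop
  nlinarith [mul_le_mul_of_nonneg_left (hrow j) hα0]

theorem one_sub_mul_sum_sq_le (hg : ∀ j k, 0 ≤ g j k) (hsymm : ∀ j k, g j k = g k j)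
    (hdiag : ∀ j, g j j = 1) (hrow : ∀ j, ∑ k, g j k ≤ 1 + ν) (a : ι → ℝ) :
    (1 - ν) * ∑ j, a j ^ 2 ≤ ∑ j, ∑ k, a j * a k * g j k := by
  -- `2 a_j a_k = (a_j + a_k)² - a_j² - a_k²`; the diagonal alone bounds the first part.
  have hsquares : ∀ j, 2 * a j ^ 2 ≤ ∑ k, g j k * (a j + a k) ^ 2 / 2 := fun j => by
    have := Finset.single_le_sum (f := fun k => g j k * (a j + a k) ^ 2 / 2)
      (fun k _ => by have := hg j k; positivity) (Finset.mem_univ j)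
    rw [hdiag] at this
    linarith
  have hrows : ∀ j, ∑ k, g j k * a j ^ 2 ≤ (1 + ν) * a j ^ 2 := fun j => by
    rw [← Finset.sum_mul]
    exact mul_le_mul_of_nonneg_right (hrow j) (sq_nonneg _)
  have hswap : ∑ j, ∑ k, g j k * a k ^ 2 = ∑ j, ∑ k, g j k * a j ^ 2 := by
    rw [Finset.sum_comm]
    simp only [hsymm]
  have hsplit : ∑ j, ∑ k, a j * a k * g j k =
      ∑ j, ∑ k, g j k * (a j + a k) ^ 2 / 2 -
        (∑ j, ∑ k, g j k * a j ^ 2 + ∑ j, ∑ k, g j k * a k ^ 2) / 2 := by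
    simp only [← Finset.sum_add_distrib, Finset.sum_div, ← Finset.sum_sub_distrib]
    exact Finset.sum_congr rfl fun j _ => Finset.sum_congr rfl fun k _ => by ring
  have h1 := Finset.sum_le_sum fun j (_ : j ∈ Finset.univ) => hsquares j
  have h2 := Finset.sum_le_sum fun j (_ : j ∈ Finset.univ) => hrows j
  simp only [← Finset.mul_sum] at h1 h2
  linarith

end Gram

section Frame

variable {ι : Type*} [Fintype ι] {d : ℕ} {w : ι → Fin d → ℝ} {ν : ℝ}

theorem sum_sq_dotProduct_le_of_frame
    (hframe : ∀ x : Fin d → ℝ, ∑ j, (x ⬝ᵥ w j) ^ 2 ≤ (1 + ν) * ∑ i, x i ^ 2)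
    {v : Fin d → ℝ} (hv : v ⬝ᵥ v = 1) : ∑ j, (w j ⬝ᵥ v) ^ 2 ≤ 1 + ν := by
  simpa only [dotProduct_comm v, ← dotProduct_self_eq_sum_sq, hv, mul_one] using hframe v

theorem nonneg_of_frame (hw : ∀ j, w j ⬝ᵥ w j = 1)
    (hframe : ∀ x : Fin d → ℝ, ∑ j, (x ⬝ᵥ w j) ^ 2 ≤ (1 + ν) * ∑ i, x i ^ 2) (j : ι) :
    0 ≤ ν := by
  have hdiag : (w j ⬝ᵥ w j) ^ 2 ≤ ∑ k, (w k ⬝ᵥ w j) ^ 2 :=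
    Finset.single_le_sum (f := fun k => (w k ⬝ᵥ w j) ^ 2) (fun k _ => sq_nonneg _)
      (Finset.mem_univ j)
  rw [hw, one_pow] at hdiag
  linarith [sum_sq_dotProduct_le_of_frame hframe (hw j)]

theorem one_sub_mul_sum_sq_le_frobNorm_sq (hw : ∀ j, w j ⬝ᵥ w j = 1)
    (hframe : ∀ x : Fin d → ℝ, ∑ j, (x ⬝ᵥ w j) ^ 2 ≤ (1 + ν) * ∑ i, x i ^ 2) (a : ι → ℝ) :
    (1 - ν) * ∑ j, a j ^ 2 ≤ frobNorm (∑ j, a j • vecMulVec (w j) (w j)) ^ 2 := by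
  rw [frobNorm_sum_smul_vecMulVec_self_sq]
  exact one_sub_mul_sum_sq_le (g := fun j k => (w k ⬝ᵥ w j) ^ 2) (fun _ _ => sq_nonneg _)
    (fun j k => by rw [dotProduct_comm]) (fun j => by rw [hw, one_pow])
    (fun j => sum_sq_dotProduct_le_of_frame hframe (hw j)) a

theorem neg_le_frobInner_sum_smul_vecMulVec (hw : ∀ j, w j ⬝ᵥ w j = 1)
    (hframe : ∀ x : Fin d → ℝ, ∑ j, (x ⬝ᵥ w j) ^ 2 ≤ (1 + ν) * ∑ i, x i ^ 2) (hν : 0 ≤ ν)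
    {a : ι → ℝ} (ha : ∀ j, 0 ≤ ∑ k, a k * (w k ⬝ᵥ w j) ^ 2) {v : Fin d → ℝ} (hv : v ⬝ᵥ v = 1) :
    -(ν * √(∑ j, a j ^ 2) * (1 + ν)) ≤
      frobInner (∑ j, a j • vecMulVec (w j) (w j)) (vecMulVec v v) := by
  set α := √(∑ j, a j ^ 2)
  have hα0 : 0 ≤ α := Real.sqrt_nonneg _
  have hα : ∀ k, a k ≤ α := fun k => (le_abs_self _).trans <| Real.abs_le_sqrt <|
    Finset.single_le_sum (f := fun k => a k ^ 2) (fun _ _ => sq_nonneg _) (Finset.mem_univ k)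
  have hlow : ∀ j, -(ν * α) ≤ a j := fun j =>
    neg_mul_le_of_sum_mul_nonneg (g := fun j k => (w k ⬝ᵥ w j) ^ 2) (fun _ _ => sq_nonneg _)
      (fun j => by rw [hw, one_pow]) (fun j => sum_sq_dotProduct_le_of_frame hframe (hw j))
      hα hα0 (ha j)
  rw [frobInner_sum_smul_vecMulVec_self]
  calc -(ν * α * (1 + ν)) ≤ -(ν * α) * ∑ j, (w j ⬝ᵥ v) ^ 2 := by
        have := mul_le_mul_of_nonneg_left (sum_sq_dotProduct_le_of_frame hframe hv)
          (mul_nonneg hν hα0)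
        linarith [neg_mul (ν * α) (∑ j, (w j ⬝ᵥ v) ^ 2)]
    _ ≤ ∑ j, a j * (w j ⬝ᵥ v) ^ 2 := by
        rw [Finset.mul_sum]
        exact Finset.sum_le_sum fun j _ => mul_le_mul_of_nonneg_right (hlow j) (sq_nonneg _)

end Frame

theorem smallest_eigenvalue_bound_of_estimates {L δ ν α lam : ℝ} (hlam : |lam| ≤ L) (hδ : 0 ≤ δ)
    (hν0 : 0 ≤ ν) (hν : ν < 1 / 4) (hα0 : 0 ≤ α) (hα : (1 - ν) * α ^ 2 ≤ (L + δ) ^ 2)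
    (hcore : -(ν * α * (1 + ν)) - δ ≤ L * lam) :
    -2 * δ / L - 8 * δ - 4 * ν ≤ lam := by
  rcases (abs_nonneg lam |>.trans hlam).eq_or_lt with hL0 | hLpos
  · subst hL0
    rw [div_zero]
    linarith [neg_abs_le lam]
  have hα2 : α ≤ 2 * (L + δ) :=
    (pow_le_pow_iff_left₀ hα0 (by positivity) two_ne_zero).1 (by nlinarith)
  have herr : ν * α * (1 + ν) ≤ ν * (2 * (L + δ)) * (5 / 4) :=
    mul_le_mul (mul_le_mul_of_nonneg_left hα2 hν0) (by linarith) (by linarith) (by positivity)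
  have hmul : -2 * δ - 4 * ν * L ≤ L * lam := by nlinarith
  have hdiv : -2 * δ / L - 4 * ν ≤ lam := by
    rw [div_sub' hLpos.ne', div_le_iff₀ hLpos]
    linarith
  linarith

/-- lower bound for the smallest eigenvalue of a stationary point. -/
theorem stationary_point_smallest_eigenvalue_bound
    (d m : ℕ) (hd : 2 ≤ d) (hm : 0 < m)
    (w : Fin m → Fin d → ℝ) (hw : ∀ j, vnorm (w j) = 1)
    (Wh : Submodule ℝ (Matrix (Fin d) (Fin d) ℝ))
    (PW PWh : Matrix (Fin d) (Fin d) ℝ →ₗ[ℝ] Matrix (Fin d) (Fin d) ℝ)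
    (hPW : IsOrthProjOn (Submodule.span ℝ (Set.range fun j => vecMulVec (w j) (w j))) PW)
    (hPWh : IsOrthProjOn Wh PWh)
    (δ : ℝ) (hδ : δ = hsNorm (PW - PWh))
    (CF ν : ℝ)
    (hframe : ∀ x : Fin d → ℝ, ∑ j, (dotProduct x (w j)) ^ 2 ≤ CF * ∑ i, x i ^ 2)
    (hν : ν = CF - 1)
    (hδν : max δ ν < 1 / 4)
    (M : Matrix (Fin d) (Fin d) ℝ) (hM : M ∈ Wh) (hMS : frobNorm M = 1)
    (lam : Fin d → ℝ) (u : Fin d → Fin d → ℝ)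
    (horth : ∀ i j : Fin d, dotProduct (u i) (u j) = if i = j then 1 else 0)
    (heig : ∀ i, M.mulVec (u i) = lam i • u i)
    (hA1 : lam ⟨0, by omega⟩ = specNorm M)
    (hstat : ∀ X ∈ Wh,
      dotProduct (u ⟨0, by omega⟩) (X.mulVec (u ⟨0, by omega⟩)) =
        lam ⟨0, by omega⟩ * frobInner X M) :
    -2 * δ / lam ⟨0, by omega⟩ - 8 * δ - 4 * ν ≤ lam ⟨d - 1, by omega⟩ := by
  rw [show CF = 1 + ν by linarith] at hframe
  set L := lam ⟨0, by omega⟩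
  set U := vecMulVec (u ⟨0, by omega⟩) (u ⟨0, by omega⟩)
  set V := vecMulVec (u ⟨d - 1, by omega⟩) (u ⟨d - 1, by omega⟩)
  have hu : ∀ i, u i ⬝ᵥ u i = 1 := fun i => by simpa using horth i i
  have hw' : ∀ j, w j ⬝ᵥ w j = 1 := fun j => vnorm_eq_one_iff.1 (hw j)
  have hν0 : 0 ≤ ν := nonneg_of_frame hw' hframe ⟨0, hm⟩
  have hlam : ∀ i, |lam i| ≤ L := fun i => hA1 ▸ abs_le_specNorm_of_mulVec_eq_smul (hu i) (heig i)
  have hU : frobNorm U = 1 := frobNorm_vecMulVec_self (hu _)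
  have hPWhU : PWh U = L • M := hPWh.apply_vecMulVec_self_eq_smul hM _ L hstat
  obtain ⟨a, hPWU, ha⟩ := hPW.exists_gram_coeffs (u ⟨0, by omega⟩)
  have hnorm : frobNorm (PW U) ≤ L + δ := by
    have hL0 : 0 ≤ L := (abs_nonneg _).trans (hlam ⟨0, by omega⟩)
    simpa only [hPWhU, frobNorm_smul, hMS, abs_of_nonneg hL0, hU, ← hδ, mul_one]
      using frobNorm_apply_le_add_hsNorm_sub PW PWh U
  have hcore : frobInner (PW U) V - δ ≤ L * lam ⟨d - 1, by omega⟩ := by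
    have := abs_frobInner_apply_sub_apply_le PW PWh U V
    rw [hPWhU, frobInner_smul_left, frobInner_comm M, frobInner_vecMulVec_self_left,
      dotProduct_mulVec_self_of_mulVec_eq_smul (hu _) (heig _), hU, frobNorm_vecMulVec_self (hu _),
      ← hδ, mul_one, mul_one] at this
    linarith [(abs_le.1 this).2]
  rw [hPWU] at hnorm hcore
  apply smallest_eigenvalue_bound_of_estimates (hlam _) (hδ ▸ hsNorm_nonneg _) hν0
    ((le_max_right δ ν).trans_lt hδν) (Real.sqrt_nonneg (∑ j, a j ^ 2))
  · rw [Real.sq_sqrt (Finset.sum_nonneg fun _ _ => sq_nonneg _)]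
    exact (one_sub_mul_sum_sq_le_frobNorm_sq hw' hframe a).trans
      (pow_le_pow_left₀ (frobNorm_nonneg _) hnorm 2)
  · linarith [neg_le_frobInner_sum_smul_vecMulVec hw' hframe hν0
      (fun j => (ha j).symm ▸ sq_nonneg _) (hu ⟨d - 1, by omega⟩)]
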